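/- Under the hypotheses of the dual certificate lemma with ‖P_Ω P_T‖ ≤ 1 − ε, for any perturbation H the feasible objective satisfies ‖L₀+H‖_* + λ‖S₀−H‖₁ ≥ ‖L₀‖_* + λ‖S₀‖₁ + ((1−α) − λε)‖P_{T⊥}H‖_* + λ(1/2 − (1−ε)ε)‖P_{Ω⊥}H‖₁. -/

import Mathlib

open Matrix

noncomputable def frobInner {n : ℕ} (A B : Matrix (Fin n) (Fin n) ℝ) : ℝ :=
  Matrix.trace (Aᵀ * B)

noncomputable def matSpectralNorm {n : ℕ} (A : Matrix (Fin n) (Fin n) ℝ) : ℝ :=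
  ‖Matrix.toEuclideanCLM (𝕜 := ℝ) A‖

noncomputable def nuclearNorm {n : ℕ} (A : Matrix (Fin n) (Fin n) ℝ) : ℝ :=
  ∑ i, Real.sqrt ((show (Aᵀ * A).IsHermitian by
    simpa [Matrix.conjTranspose_eq_transpose_of_trivial] using
      Matrix.isHermitian_conjTranspose_mul_self A).eigenvalues i)

noncomputable def l1Norm {n : ℕ} (A : Matrix (Fin n) (Fin n) ℝ) : ℝ :=
  ∑ i, ∑ j, |A i j|

noncomputable def signMatrix {n : ℕ} (A : Matrix (Fin n) (Fin n) ℝ) :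
    Matrix (Fin n) (Fin n) ℝ :=
  Matrix.of fun i j => Real.sign (A i j)

def projSupp {n : ℕ} (Ω : Set (Fin n × Fin n)) [DecidablePred (· ∈ Ω)]
    (M : Matrix (Fin n) (Fin n) ℝ) : Matrix (Fin n) (Fin n) ℝ :=
  Matrix.of fun i j => if (i, j) ∈ Ω then M i j else 0

def projT {n r : ℕ} (U V : Matrix (Fin n) (Fin r) ℝ)
    (M : Matrix (Fin n) (Fin n) ℝ) : Matrix (Fin n) (Fin n) ℝ :=
  U * Uᵀ * M + M * (V * Vᵀ) - U * Uᵀ * M * (V * Vᵀ)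


noncomputable def frobNorm {n : ℕ} (A : Matrix (Fin n) (Fin n) ℝ) : ℝ :=
  Real.sqrt (∑ i, ∑ j, (A i j) ^ 2)

/-!
At `L₀ = U Σ Vᵀ` the matrix `U Vᵀ + W₀`, with `W₀` the polar factor of `P_{T⊥} H`, has spectral
norm at most one, so pairing it with `L₀ + H` gives
`‖L₀ + H‖_* ≥ ‖L₀‖_* + ⟪U Vᵀ, H⟫ + ‖P_{T⊥} H‖_*`; entrywise,
`‖S₀ - H‖₁ ≥ ‖S₀‖₁ - ⟪sgn S₀, H⟫ + ‖P_{Ω⊥} H‖₁`. Substituting `U Vᵀ = λ (sgn S₀ + F + Δ) - W`,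
the `W`- and `F`-terms cost at most `α ‖P_{T⊥} H‖_*` and `λ/2 ‖P_{Ω⊥} H‖₁`, and the `Δ`-term at
most `λ ε² ‖P_Ω H‖_F`. Splitting `P_Ω H = P_Ω P_T (P_Ω H) + P_Ω P_T (P_{Ω⊥} H) + P_Ω P_{T⊥} H`,
the bound `‖P_Ω P_T‖ ≤ 1 - ε` gives `ε ‖P_Ω H‖_F ≤ (1 - ε) ‖P_{Ω⊥} H‖_F + ‖P_{T⊥} H‖_F`.
-/

open scoped Matrix.Norms.L2Operator

variable {n : ℕ}

section Frobenius

variable (A B C : Matrix (Fin n) (Fin n) ℝ)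

lemma frobInner_eq_sum : frobInner A B = ∑ i, ∑ j, A i j * B i j := by
  simp only [frobInner, trace, diag_apply, mul_apply, transpose_apply]
  exact Finset.sum_comm

lemma frobInner_add_left : frobInner (A + B) C = frobInner A C + frobInner B C := by
  simp [frobInner, Matrix.add_mul]

lemma frobInner_sub_left : frobInner (A - B) C = frobInner A C - frobInner B C := by
  simp [frobInner, Matrix.sub_mul]

lemma frobInner_smul_left (c : ℝ) : frobInner (c • A) B = c * frobInner A B := by
  simp [frobInner]

lemma frobInner_add_right : frobInner A (B + C) = frobInner A B + frobInner A C := by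
  simp [frobInner, Matrix.mul_add]

lemma frobInner_sub_right : frobInner A (B - C) = frobInner A B - frobInner A C := by
  simp [frobInner, Matrix.mul_sub]

lemma frobInner_mul_left : frobInner (C * A) B = frobInner A (Cᵀ * B) := by
  simp [frobInner, transpose_mul, Matrix.mul_assoc]

lemma frobInner_mul_right : frobInner (A * C) B = frobInner A (B * Cᵀ) := by
  rw [frobInner, frobInner, transpose_mul, Matrix.mul_assoc, trace_mul_comm, Matrix.mul_assoc,
    trace_mul_comm]

lemma frobInner_eq_inner :
    frobInner A B = inner ℝ (WithLp.toLp 2 fun p : Fin n × Fin n => A p.1 p.2)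
      (WithLp.toLp 2 fun p : Fin n × Fin n => B p.1 p.2) := by
  simp [frobInner_eq_sum, PiLp.inner_apply, Fintype.sum_prod_type, mul_comm]

lemma frobNorm_eq_norm : frobNorm A = ‖WithLp.toLp 2 fun p : Fin n × Fin n => A p.1 p.2‖ := by
  simp [frobNorm, EuclideanSpace.norm_eq, Fintype.sum_prod_type]

lemma abs_frobInner_le : |frobInner A B| ≤ frobNorm A * frobNorm B := by
  rw [frobInner_eq_inner, frobNorm_eq_norm, frobNorm_eq_norm]
  exact abs_real_inner_le_norm _ _

lemma frobNorm_add_le : frobNorm (A + B) ≤ frobNorm A + frobNorm B := by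
  simp only [frobNorm_eq_norm, Matrix.add_apply]
  exact norm_add_le (WithLp.toLp 2 fun p : Fin n × Fin n => A p.1 p.2)
    (WithLp.toLp 2 fun p : Fin n × Fin n => B p.1 p.2)

lemma frobNorm_le_l1Norm : frobNorm A ≤ l1Norm A := by
  have hsq : ∑ i, ∑ j, A i j ^ 2 ≤ (∑ i, ∑ j, |A i j|) ^ 2 := by
    simpa [Fintype.sum_prod_type, sq_abs] using
      Finset.sum_sq_le_sq_sum_of_nonneg (s := Finset.univ)
        (fun (p : Fin n × Fin n) _ => abs_nonneg (A p.1 p.2))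
  exact Real.sqrt_le_iff.mpr
    ⟨Finset.sum_nonneg fun i _ => Finset.sum_nonneg fun j _ => abs_nonneg _, hsq⟩

lemma abs_frobInner_le_mul_l1Norm {c : ℝ} (hA : ∀ i j, |A i j| ≤ c) :
    |frobInner A B| ≤ c * l1Norm B := by
  rw [frobInner_eq_sum, l1Norm, Finset.mul_sum]
  refine (Finset.abs_sum_le_sum_abs _ _).trans (Finset.sum_le_sum fun i _ => ?_)
  rw [Finset.mul_sum]
  refine (Finset.abs_sum_le_sum_abs _ _).trans (Finset.sum_le_sum fun j _ => ?_)
  rw [abs_mul]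
  exact mul_le_mul_of_nonneg_right (hA i j) (abs_nonneg _)

end Frobenius

lemma frobInner_sub_apply_of_symm (P : Matrix (Fin n) (Fin n) ℝ → Matrix (Fin n) (Fin n) ℝ)
    (hP : ∀ A B, frobInner (P A) B = frobInner A (P B)) {W : Matrix (Fin n) (Fin n) ℝ}
    (hW : P W = 0) (H : Matrix (Fin n) (Fin n) ℝ) : frobInner W (H - P H) = frobInner W H := by
  rw [frobInner_sub_right, ← hP, hW]
  simp [frobInner]

section OperatorNorm

variable {m k : Type*} [Fintype m] [Fintype k] [DecidableEq k]

lemma matSpectralNorm_eq_norm (A : Matrix (Fin n) (Fin n) ℝ) : matSpectralNorm A = ‖A‖ := rfl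

lemma Matrix.norm_le_one_of_transpose_mul_self_idem (A : Matrix m k ℝ)
    (h : Aᵀ * A * (Aᵀ * A) = Aᵀ * A) : ‖A‖ ≤ 1 := by
  have hA : ‖Aᵀ * A‖ = ‖A‖ * ‖A‖ := by
    simpa [conjTranspose_eq_transpose_of_trivial] using l2_opNorm_conjTranspose_mul_self A
  have hP : ‖Aᵀ * A‖ = ‖Aᵀ * A‖ * ‖Aᵀ * A‖ := by
    simpa [conjTranspose_eq_transpose_of_trivial, h] using
      l2_opNorm_conjTranspose_mul_self (Aᵀ * A)
  have hPle : ‖Aᵀ * A‖ ≤ 1 := by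
    rcases mul_eq_zero.mp (show ‖Aᵀ * A‖ * (‖Aᵀ * A‖ - 1) = 0 by linarith) with h0 | h1 <;>
      linarith
  nlinarith [norm_nonneg A]

lemma Matrix.mulVec_dotProduct_le (G : Matrix m k ℝ) (x : k → ℝ) (y : m → ℝ) :
    (G *ᵥ x) ⬝ᵥ y ≤ ‖G‖ * ‖WithLp.toLp 2 x‖ * ‖WithLp.toLp 2 y‖ :=
  calc (G *ᵥ x) ⬝ᵥ y = inner ℝ (WithLp.toLp 2 (G *ᵥ x)) (WithLp.toLp 2 y) := by
        simp [PiLp.inner_apply, dotProduct, mul_comm]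
    _ ≤ ‖WithLp.toLp 2 (G *ᵥ x)‖ * ‖WithLp.toLp 2 y‖ := real_inner_le_norm _ _
    _ ≤ ‖G‖ * ‖WithLp.toLp 2 x‖ * ‖WithLp.toLp 2 y‖ := by
        gcongr
        exact l2_opNorm_mulVec G (WithLp.toLp 2 x)

end OperatorNorm

lemma Matrix.norm_toLp_transpose_apply_sq {m k : Type*} [Fintype m] (Y : Matrix m k ℝ) (i : k) :
    ‖WithLp.toLp 2 (Yᵀ i)‖ ^ 2 = (Yᵀ * Y) i i := by
  rw [EuclideanSpace.real_norm_sq_eq]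
  simp [mul_apply, sq]

lemma frobInner_mul_transpose_le {r : ℕ} (G : Matrix (Fin n) (Fin n) ℝ)
    (Y X : Matrix (Fin n) (Fin r) ℝ) (hX : Xᵀ * X = 1) :
    frobInner G (Y * Xᵀ) ≤ ‖G‖ * ∑ i, ‖WithLp.toLp 2 (Yᵀ i)‖ := by
  have hcol : ∀ i, ‖WithLp.toLp 2 (Xᵀ i)‖ = 1 := fun i => by
    have := norm_toLp_transpose_apply_sq X i
    rw [hX, one_apply_eq] at this
    nlinarith [norm_nonneg (WithLp.toLp 2 (Xᵀ i))]
  have htr : frobInner G (Y * Xᵀ) = ∑ i, (G *ᵥ Xᵀ i) ⬝ᵥ Yᵀ i := by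
    rw [frobInner, ← Matrix.mul_assoc, trace_mul_comm]
    simp only [trace, diag_apply, mul_apply, transpose_apply, mulVec, dotProduct, Finset.sum_mul,
      Finset.mul_sum]
    refine Finset.sum_congr rfl fun i _ => ?_
    rw [Finset.sum_comm]
    exact Finset.sum_congr rfl fun j _ => Finset.sum_congr rfl fun k _ => by ring
  rw [htr, Finset.mul_sum]
  refine Finset.sum_le_sum fun i _ => ?_
  simpa [hcol] using mulVec_dotProduct_le G (Xᵀ i) (Yᵀ i)

section OrthogonalConj

variable {m R : Type*} [Fintype m] [DecidableEq m] [CommRing R] {Q : Matrix m m R}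

lemma Matrix.conj_diagonal_mul_conj_diagonal (hQ : Qᵀ * Q = 1) (a b : m → R) :
    Q * diagonal a * Qᵀ * (Q * diagonal b * Qᵀ) = Q * diagonal (a * b) * Qᵀ := by
  simp only [Matrix.mul_assoc]
  rw [← Matrix.mul_assoc Qᵀ Q, hQ, Matrix.one_mul, ← Matrix.mul_assoc (diagonal a),
    diagonal_mul_diagonal]
  rfl

lemma Matrix.transpose_conj_diagonal (Q : Matrix m m R) (a : m → R) :
    (Q * diagonal a * Qᵀ)ᵀ = Q * diagonal a * Qᵀ := by
  simp [transpose_mul, Matrix.mul_assoc]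

lemma Matrix.trace_conj_diagonal (hQ : Qᵀ * Q = 1) (a : m → R) :
    trace (Q * diagonal a * Qᵀ) = ∑ i, a i := by
  rw [trace_mul_comm, ← Matrix.mul_assoc, hQ, Matrix.one_mul, trace_diagonal]

end OrthogonalConj

section Gram

variable (A : Matrix (Fin n) (Fin n) ℝ)

lemma isHermitian_transpose_mul_self : (Aᵀ * A).IsHermitian := by
  simpa [conjTranspose_eq_transpose_of_trivial] using isHermitian_conjTranspose_mul_self A

noncomputable def gramEigenvalues : Fin n → ℝ :=
  (isHermitian_transpose_mul_self A).eigenvalues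

noncomputable def gramEigenvectors : Matrix (Fin n) (Fin n) ℝ :=
  (isHermitian_transpose_mul_self A).eigenvectorUnitary

lemma gramEigenvectors_transpose_mul : (gramEigenvectors A)ᵀ * gramEigenvectors A = 1 := by
  have h := (Unitary.mem_iff.mp (isHermitian_transpose_mul_self A).eigenvectorUnitary.2).1
  simp only [star_eq_conjTranspose, conjTranspose_eq_transpose_of_trivial] at h
  exact h

lemma transpose_mul_self_eq_conj_diagonal :
    Aᵀ * A = gramEigenvectors A * diagonal (gramEigenvalues A) * (gramEigenvectors A)ᵀ := by
  have h := (isHermitian_transpose_mul_self A).spectral_theorem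
  simp only [RCLike.ofReal_real_eq_id, CompTriple.comp_eq, Unitary.conjStarAlgAut_apply,
    star_eq_conjTranspose, conjTranspose_eq_transpose_of_trivial] at h
  exact h

lemma gramEigenvalues_nonneg (i : Fin n) : 0 ≤ gramEigenvalues A i := by
  have h := posSemidef_conjTranspose_mul_self A
  rw [conjTranspose_eq_transpose_of_trivial] at h
  exact h.eigenvalues_nonneg i

lemma nuclearNorm_eq_sum_sqrt : nuclearNorm A = ∑ i, √(gramEigenvalues A i) := rfl

lemma nuclearNorm_nonneg : 0 ≤ nuclearNorm A :=
  Finset.sum_nonneg fun _ _ => Real.sqrt_nonneg _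

lemma frobNorm_le_nuclearNorm : frobNorm A ≤ nuclearNorm A := by
  have hsum : ∑ i, ∑ j, A i j ^ 2 = ∑ i, gramEigenvalues A i := by
    rw [← trace_conj_diagonal (gramEigenvectors_transpose_mul A) (gramEigenvalues A),
      ← transpose_mul_self_eq_conj_diagonal]
    simp only [trace, diag_apply, mul_apply, transpose_apply, sq]
    exact Finset.sum_comm
  have hsq : ∑ i, gramEigenvalues A i ≤ (nuclearNorm A) ^ 2 := by
    simpa [nuclearNorm_eq_sum_sqrt, Real.sq_sqrt (gramEigenvalues_nonneg A _)] using
      Finset.sum_sq_le_sq_sum_of_nonneg (s := Finset.univ)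
        (fun i _ => Real.sqrt_nonneg (gramEigenvalues A i))
  exact Real.sqrt_le_iff.mpr ⟨nuclearNorm_nonneg A, hsum ▸ hsq⟩

lemma frobInner_le_norm_mul_nuclearNorm (G : Matrix (Fin n) (Fin n) ℝ) :
    frobInner G A ≤ ‖G‖ * nuclearNorm A := by
  set Q := gramEigenvectors A
  have hQ := gramEigenvectors_transpose_mul A
  have hgram : (A * Q)ᵀ * (A * Q) = diagonal (gramEigenvalues A) := by
    rw [transpose_mul, Matrix.mul_assoc, ← Matrix.mul_assoc Aᵀ,
      transpose_mul_self_eq_conj_diagonal]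
    simp only [Q, Matrix.mul_assoc]
    rw [hQ, Matrix.mul_one, ← Matrix.mul_assoc, hQ, Matrix.one_mul]
  have hcol : ∀ i, ‖WithLp.toLp 2 ((A * Q)ᵀ i)‖ = √(gramEigenvalues A i) := fun i => by
    rw [← diagonal_apply_eq (gramEigenvalues A) i, ← hgram, ← norm_toLp_transpose_apply_sq,
      Real.sqrt_sq (norm_nonneg _)]
  have hA : A * Q * Qᵀ = A := by
    rw [Matrix.mul_assoc, mul_eq_one_comm.mp hQ, Matrix.mul_one]
  have h := frobInner_mul_transpose_le G (A * Q) Q hQ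
  rwa [hA, Finset.sum_congr rfl fun i _ => hcol i, ← nuclearNorm_eq_sum_sqrt] at h

/-- The partial isometry `A |A|⁻¹` of the polar decomposition of `A`; as `(√0)⁻¹ = 0`, it vanishes
on `ker A`. -/
noncomputable def polarFactor : Matrix (Fin n) (Fin n) ℝ :=
  A * (gramEigenvectors A * diagonal (fun i => (√(gramEigenvalues A i))⁻¹) *
    (gramEigenvectors A)ᵀ)

lemma transpose_polarFactor_mul_self :
    (polarFactor A)ᵀ * polarFactor A = gramEigenvectors A *
      diagonal (fun i => √(gramEigenvalues A i) * (√(gramEigenvalues A i))⁻¹) *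
      (gramEigenvectors A)ᵀ := by
  have hQ := gramEigenvectors_transpose_mul A
  rw [polarFactor, transpose_mul, transpose_conj_diagonal, Matrix.mul_assoc,
    ← Matrix.mul_assoc Aᵀ, transpose_mul_self_eq_conj_diagonal, ← Matrix.mul_assoc,
    conj_diagonal_mul_conj_diagonal hQ, conj_diagonal_mul_conj_diagonal hQ]
  congr 3 with i
  simp only [Pi.mul_apply, inv_mul_eq_div, Real.div_sqrt]

lemma transpose_polarFactor_mul_self_idem :
    (polarFactor A)ᵀ * polarFactor A * ((polarFactor A)ᵀ * polarFactor A) =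
      (polarFactor A)ᵀ * polarFactor A := by
  rw [transpose_polarFactor_mul_self,
    conj_diagonal_mul_conj_diagonal (gramEigenvectors_transpose_mul A)]
  congr 3 with i
  by_cases h : √(gramEigenvalues A i) = 0 <;> simp [h]

lemma norm_polarFactor_le_one : ‖polarFactor A‖ ≤ 1 :=
  norm_le_one_of_transpose_mul_self_idem _ (transpose_polarFactor_mul_self_idem A)

lemma frobInner_polarFactor_self : frobInner (polarFactor A) A = nuclearNorm A := by
  rw [frobInner, polarFactor, transpose_mul, transpose_conj_diagonal, Matrix.mul_assoc,
    transpose_mul_self_eq_conj_diagonal,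
    conj_diagonal_mul_conj_diagonal (gramEigenvectors_transpose_mul A),
    trace_conj_diagonal (gramEigenvectors_transpose_mul A), nuclearNorm_eq_sum_sqrt]
  simp only [Pi.mul_apply, inv_mul_eq_div, Real.div_sqrt]

lemma transpose_mul_polarFactor_eq_zero {r : ℕ} {U : Matrix (Fin n) (Fin r) ℝ}
    (h : Uᵀ * A = 0) : Uᵀ * polarFactor A = 0 := by
  rw [polarFactor, ← Matrix.mul_assoc, h, Matrix.zero_mul]

lemma polarFactor_mul_eq_zero {r : ℕ} {V : Matrix (Fin n) (Fin r) ℝ}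
    (h : A * V = 0) : polarFactor A * V = 0 := by
  set Q := gramEigenvectors A
  set d := fun i => (√(gramEigenvalues A i))⁻¹
  -- `|A|⁻¹` factors through `Aᵀ * A`, which kills `V`
  have hfactor : Q * diagonal d * Qᵀ = Q * diagonal (d * d * d) * Qᵀ * (Aᵀ * A) := by
    rw [transpose_mul_self_eq_conj_diagonal,
      conj_diagonal_mul_conj_diagonal (gramEigenvectors_transpose_mul A)]
    congr 3 with i
    have hx := gramEigenvalues_nonneg A i
    by_cases hx0 : gramEigenvalues A i = 0
    · simp [d, hx0]
    · have hs : √(gramEigenvalues A i) ≠ 0 := by positivity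
      simp only [d, Pi.mul_apply]
      field_simp
      rw [Real.sq_sqrt hx]
  rw [polarFactor, hfactor]
  simp only [Matrix.mul_assoc, h, Matrix.mul_zero]

end Gram

lemma Real.sign_mul_self_eq_abs (x : ℝ) : Real.sign x * x = |x| := by
  rcases lt_trichotomy x 0 with h | rfl | h
  · rw [Real.sign_of_neg h, abs_of_neg h, neg_one_mul]
  · simp
  · rw [Real.sign_of_pos h, abs_of_pos h, one_mul]

lemma Real.abs_sign_le_one (x : ℝ) : |Real.sign x| ≤ 1 := by
  rcases Real.sign_apply_eq x with h | h | h <;> simp [h]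

lemma abs_sub_sign_mul_le (x h : ℝ) : |x| - Real.sign x * h ≤ |x - h| :=
  calc |x| - Real.sign x * h = Real.sign x * (x - h) := by
        rw [mul_sub, Real.sign_mul_self_eq_abs]
    _ ≤ |Real.sign x| * |x - h| := by rw [← abs_mul]; exact le_abs_self _
    _ ≤ |x - h| := mul_le_of_le_one_left (abs_nonneg _) (Real.abs_sign_le_one x)

section Support

variable (Ω : Set (Fin n × Fin n)) [DecidablePred (· ∈ Ω)]

lemma projSupp_add (A B : Matrix (Fin n) (Fin n) ℝ) :
    projSupp Ω (A + B) = projSupp Ω A + projSupp Ω B := by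
  ext i j
  by_cases h : (i, j) ∈ Ω <;> simp [projSupp, h]

lemma frobInner_projSupp (A B : Matrix (Fin n) (Fin n) ℝ) :
    frobInner (projSupp Ω A) B = frobInner A (projSupp Ω B) := by
  simp only [frobInner_eq_sum]
  refine Finset.sum_congr rfl fun i _ => Finset.sum_congr rfl fun j _ => ?_
  by_cases h : (i, j) ∈ Ω <;> simp [projSupp, h]

lemma frobNorm_projSupp_le (A : Matrix (Fin n) (Fin n) ℝ) :
    frobNorm (projSupp Ω A) ≤ frobNorm A := by
  refine Real.sqrt_le_sqrt (Finset.sum_le_sum fun i _ => Finset.sum_le_sum fun j _ => ?_)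
  by_cases h : (i, j) ∈ Ω <;> simp [projSupp, h, sq_nonneg]

lemma le_l1Norm_sub {S : Matrix (Fin n) (Fin n) ℝ} (hS : ∀ p ∉ Ω, S p.1 p.2 = 0)
    (H : Matrix (Fin n) (Fin n) ℝ) :
    l1Norm S - frobInner (signMatrix S) H + l1Norm (H - projSupp Ω H) ≤ l1Norm (S - H) := by
  simp only [l1Norm, frobInner_eq_sum, ← Finset.sum_sub_distrib, ← Finset.sum_add_distrib]
  refine Finset.sum_le_sum fun i _ => Finset.sum_le_sum fun j _ => ?_
  by_cases h : (i, j) ∈ Ω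
  · simpa [projSupp, signMatrix, h] using abs_sub_sign_mul_le (S i j) (H i j)
  · simp [projSupp, signMatrix, h, hS (i, j) h]

end Support

lemma projT_add {r : ℕ} (U V : Matrix (Fin n) (Fin r) ℝ) (A B : Matrix (Fin n) (Fin n) ℝ) :
    projT U V (A + B) = projT U V A + projT U V B := by
  simp only [projT, Matrix.mul_add, Matrix.add_mul]
  abel

lemma frobInner_projT {r : ℕ} (U V : Matrix (Fin n) (Fin r) ℝ) (A B : Matrix (Fin n) (Fin n) ℝ) :
    frobInner (projT U V A) B = frobInner A (projT U V B) := by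
  have hU : ∀ X Y, frobInner (U * Uᵀ * X) Y = frobInner X (U * Uᵀ * Y) := fun X Y => by
    rw [frobInner_mul_left, transpose_mul, transpose_transpose]
  have hV : ∀ X Y, frobInner (X * (V * Vᵀ)) Y = frobInner X (Y * (V * Vᵀ)) := fun X Y => by
    rw [frobInner_mul_right, transpose_mul, transpose_transpose]
  have hUV : frobInner (U * Uᵀ * A * (V * Vᵀ)) B = frobInner A (U * Uᵀ * B * (V * Vᵀ)) := by
    rw [hV, hU, Matrix.mul_assoc (U * Uᵀ)]
  rw [projT, projT, frobInner_sub_left, frobInner_add_left, frobInner_sub_right,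
    frobInner_add_right, hU, hV, hUV]

section SVD

variable {r : ℕ} {U V : Matrix (Fin n) (Fin r) ℝ}

lemma transpose_mul_sub_projT (hU : Uᵀ * U = 1) (H : Matrix (Fin n) (Fin n) ℝ) :
    Uᵀ * (H - projT U V H) = 0 := by
  simp only [projT, Matrix.mul_sub, Matrix.mul_add, ← Matrix.mul_assoc, hU, Matrix.one_mul]
  abel

lemma sub_projT_mul (hV : Vᵀ * V = 1) (H : Matrix (Fin n) (Fin n) ℝ) :
    (H - projT U V H) * V = 0 := by
  simp only [projT, Matrix.sub_mul, Matrix.add_mul, Matrix.mul_assoc, hV, Matrix.mul_one]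
  abel

lemma projT_eq_zero {W : Matrix (Fin n) (Fin n) ℝ} (hUW : Uᵀ * W = 0) (hWV : W * V = 0) :
    projT U V W = 0 := by
  simp [projT, Matrix.mul_assoc, hUW, ← Matrix.mul_assoc W, hWV]

lemma mul_frobNorm_projSupp_le (Ω : Set (Fin n × Fin n)) [DecidablePred (· ∈ Ω)] {ε : ℝ}
    (hPP : ∀ M, frobNorm (projSupp Ω (projT U V M)) ≤ (1 - ε) * frobNorm M)
    (H : Matrix (Fin n) (Fin n) ℝ) :
    ε * frobNorm (projSupp Ω H) ≤
      (1 - ε) * frobNorm (H - projSupp Ω H) + frobNorm (H - projT U V H) := by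
  have hsplit : projSupp Ω H = projSupp Ω (projT U V (projSupp Ω H)) +
      projSupp Ω (projT U V (H - projSupp Ω H)) + projSupp Ω (H - projT U V H) := by
    rw [← projSupp_add, ← projT_add, ← projSupp_add]
    simp
  have h := frobNorm_add_le (projSupp Ω (projT U V (projSupp Ω H)) +
      projSupp Ω (projT U V (H - projSupp Ω H))) (projSupp Ω (H - projT U V H))
  rw [← hsplit] at h
  linarith [frobNorm_add_le (projSupp Ω (projT U V (projSupp Ω H)))
      (projSupp Ω (projT U V (H - projSupp Ω H))), hPP (projSupp Ω H), hPP (H - projSupp Ω H),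
    frobNorm_projSupp_le Ω (H - projT U V H)]

lemma neg_le_frobInner_of_projSupp_eq_self (Ω : Set (Fin n × Fin n)) [DecidablePred (· ∈ Ω)]
    {ε : ℝ} (hε₀ : 0 ≤ ε) (hε₁ : ε ≤ 1)
    (hPP : ∀ M, frobNorm (projSupp Ω (projT U V M)) ≤ (1 - ε) * frobNorm M)
    {Δ : Matrix (Fin n) (Fin n) ℝ} (hΔΩ : projSupp Ω Δ = Δ) (hΔF : frobNorm Δ ≤ ε ^ 2)
    (H : Matrix (Fin n) (Fin n) ℝ) :
    -(ε * ((1 - ε) * l1Norm (H - projSupp Ω H) + nuclearNorm (H - projT U V H))) ≤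
      frobInner Δ H := by
  rw [← hΔΩ, frobInner_projSupp]
  refine neg_le_of_abs_le ((abs_frobInner_le _ _).trans ?_)
  have hε : 0 ≤ 1 - ε := sub_nonneg.mpr hε₁
  calc frobNorm Δ * frobNorm (projSupp Ω H)
      ≤ ε * (ε * frobNorm (projSupp Ω H)) := by
        rw [← mul_assoc, ← sq]
        exact mul_le_mul_of_nonneg_right hΔF (Real.sqrt_nonneg _)
    _ ≤ ε * ((1 - ε) * frobNorm (H - projSupp Ω H) + frobNorm (H - projT U V H)) :=
        mul_le_mul_of_nonneg_left (mul_frobNorm_projSupp_le Ω hPP H) hε₀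
    _ ≤ ε * ((1 - ε) * l1Norm (H - projSupp Ω H) + nuclearNorm (H - projT U V H)) := by
        gcongr
        · exact frobNorm_le_l1Norm _
        · exact frobNorm_le_nuclearNorm _

lemma norm_mul_transpose_add_le_one (hU : Uᵀ * U = 1) (hV : Vᵀ * V = 1)
    {W : Matrix (Fin n) (Fin n) ℝ} (hUW : Uᵀ * W = 0) (hWV : W * V = 0)
    (hW : Wᵀ * W * (Wᵀ * W) = Wᵀ * W) : ‖U * Vᵀ + W‖ ≤ 1 := by
  have hWU : Wᵀ * U = 0 := by simpa using congrArg transpose hUW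
  have hVW : Vᵀ * Wᵀ = 0 := by simpa using congrArg transpose hWV
  have hgram : (U * Vᵀ + W)ᵀ * (U * Vᵀ + W) = V * Vᵀ + Wᵀ * W := by
    simp only [transpose_add, transpose_mul, transpose_transpose, Matrix.add_mul, Matrix.mul_add,
      Matrix.mul_assoc]
    simp [← Matrix.mul_assoc Uᵀ, hU, ← Matrix.mul_assoc Wᵀ, hWU, hUW]
  refine norm_le_one_of_transpose_mul_self_idem _ ?_
  rw [hgram]
  simp only [Matrix.add_mul, Matrix.mul_add, hW, Matrix.mul_assoc]
  simp [← Matrix.mul_assoc Vᵀ V, hV, ← Matrix.mul_assoc Vᵀ Wᵀ, hVW, ← Matrix.mul_assoc W V, hWV]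

variable {Sig : Matrix (Fin r) (Fin r) ℝ}

lemma frobInner_mul_transpose_svd (hU : Uᵀ * U = 1) (hV : Vᵀ * V = 1) :
    frobInner (U * Vᵀ) (U * Sig * Vᵀ) = trace Sig := by
  rw [frobInner, transpose_mul, transpose_transpose, Matrix.mul_assoc, ← Matrix.mul_assoc Uᵀ,
    ← Matrix.mul_assoc Uᵀ, hU, Matrix.one_mul, trace_mul_comm, Matrix.mul_assoc, hV,
    Matrix.mul_one]

lemma nuclearNorm_svd_le_trace (hU : Uᵀ * U = 1) (hV : Vᵀ * V = 1)
    (hdiag : ∀ i j, i ≠ j → Sig i j = 0) (hnonneg : ∀ i, 0 ≤ Sig i i) :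
    nuclearNorm (U * Sig * Vᵀ) ≤ trace Sig := by
  have hcol : ∀ i, ‖WithLp.toLp 2 ((U * Sig)ᵀ i)‖ = Sig i i := fun i => by
    have hgram : ((U * Sig)ᵀ * (U * Sig)) i i = Sig i i ^ 2 := by
      rw [transpose_mul, Matrix.mul_assoc, ← Matrix.mul_assoc Uᵀ, hU, Matrix.one_mul, sq,
        mul_apply, Finset.sum_eq_single i (fun j _ hj => by simp [hdiag j i hj]) (by simp)]
      rfl
    rw [← Real.sqrt_sq (norm_nonneg _), norm_toLp_transpose_apply_sq, hgram,
      Real.sqrt_sq (hnonneg i)]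
  have h := frobInner_mul_transpose_le (polarFactor (U * Sig * Vᵀ)) (U * Sig) V hV
  rw [frobInner_polarFactor_self, Finset.sum_congr rfl fun i _ => hcol i] at h
  exact h.trans (mul_le_of_le_one_left (Finset.sum_nonneg fun i _ => hnonneg i)
    (norm_polarFactor_le_one _))

lemma le_nuclearNorm_add (hU : Uᵀ * U = 1) (hV : Vᵀ * V = 1)
    (hdiag : ∀ i j, i ≠ j → Sig i j = 0) (hnonneg : ∀ i, 0 ≤ Sig i i)
    (H : Matrix (Fin n) (Fin n) ℝ) :
    nuclearNorm (U * Sig * Vᵀ) + frobInner (U * Vᵀ) H + nuclearNorm (H - projT U V H) ≤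
      nuclearNorm (U * Sig * Vᵀ + H) := by
  set B := H - projT U V H
  set W := polarFactor B
  have hUW : Uᵀ * W = 0 := transpose_mul_polarFactor_eq_zero B (transpose_mul_sub_projT hU H)
  have hWV : W * V = 0 := polarFactor_mul_eq_zero B (sub_projT_mul hV H)
  have hWL : frobInner W (U * Sig * Vᵀ) = 0 := by
    rw [frobInner, ← Matrix.mul_assoc, ← Matrix.mul_assoc, ← transpose_transpose U,
      ← transpose_mul, hUW]
    simp
  have hWH : frobInner W H = nuclearNorm B := by
    rw [← frobInner_sub_apply_of_symm _ (frobInner_projT U V) (projT_eq_zero hUW hWV),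
      frobInner_polarFactor_self]
  have hG := frobInner_le_norm_mul_nuclearNorm (U * Sig * Vᵀ + H) (U * Vᵀ + W)
  rw [frobInner_add_left, frobInner_add_right, frobInner_add_right, hWL, hWH,
    frobInner_mul_transpose_svd hU hV] at hG
  have hG1 := mul_le_of_le_one_left (nuclearNorm_nonneg (U * Sig * Vᵀ + H))
    (norm_mul_transpose_add_le_one hU hV hUW hWV (transpose_polarFactor_mul_self_idem B))
  linarith [nuclearNorm_svd_le_trace hU hV hdiag hnonneg]

end SVD

theorem pcp_objective_lower_bound_general {n r : ℕ}
    (L₀ S₀ : Matrix (Fin n) (Fin n) ℝ)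
    (U V : Matrix (Fin n) (Fin r) ℝ) (Sig : Matrix (Fin r) (Fin r) ℝ)
    (hU : Uᵀ * U = 1) (hV : Vᵀ * V = 1)
    (hSigdiag : ∀ i j, i ≠ j → Sig i j = 0) (hSigpos : ∀ i, 0 < Sig i i)
    (hSVD : L₀ = U * Sig * Vᵀ)
    (Ω : Set (Fin n × Fin n)) [DecidablePred (· ∈ Ω)]
    (hΩ : Ω = {p : Fin n × Fin n | S₀ p.1 p.2 ≠ 0})
    (lam α ε : ℝ)
    (hε : ε ∈ Set.Ioo (0:ℝ) 1)
    (hlam : 0 < lam)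
    -- ‖P_Ω P_T‖ ≤ 1 - ε (as operators in the Frobenius norm)
    (hPP : ∀ M : Matrix (Fin n) (Fin n) ℝ,
      frobNorm (projSupp Ω (projT U V M)) ≤ (1 - ε) * frobNorm M)
    -- the dual certificate (W, F) and the residual Δ
    (W F Δ : Matrix (Fin n) (Fin n) ℝ)
    (hWT : projT U V W = 0) (hWnorm : matSpectralNorm W ≤ α)
    (hFΩ : projSupp Ω F = 0) (hFnorm : ∀ i j, |F i j| ≤ 1/2)
    (hΔΩ : projSupp Ω Δ = Δ) (hΔF : frobNorm Δ ≤ ε ^ 2)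
    (hcert : U * Vᵀ + W = lam • (signMatrix S₀ + F + Δ)) :
    ∀ H : Matrix (Fin n) (Fin n) ℝ,
      nuclearNorm (L₀ + H) + lam * l1Norm (S₀ - H) ≥
        nuclearNorm L₀ + lam * l1Norm S₀ +
          ((1 - α) - lam * ε) * nuclearNorm (H - projT U V H) +
          lam * ((1:ℝ)/2 - (1 - ε) * ε) * l1Norm (H - projSupp Ω H) := by
  intro H
  have hnuc := hSVD ▸ le_nuclearNorm_add hU hV hSigdiag (fun i => (hSigpos i).le) H
  have hl1 := le_l1Norm_sub Ω (S := S₀) (fun p hp => by simpa [hΩ] using hp) H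
  have hUV : frobInner (U * Vᵀ) H = lam * (frobInner (signMatrix S₀) H + frobInner F H +
      frobInner Δ H) - frobInner W H := by
    rw [eq_sub_of_add_eq hcert, frobInner_sub_left, frobInner_smul_left, frobInner_add_left,
      frobInner_add_left]
  have hW : frobInner W H ≤ α * nuclearNorm (H - projT U V H) := by
    rw [← frobInner_sub_apply_of_symm _ (frobInner_projT U V) hWT]
    exact (frobInner_le_norm_mul_nuclearNorm _ W).trans
      (mul_le_mul_of_nonneg_right (matSpectralNorm_eq_norm W ▸ hWnorm) (nuclearNorm_nonneg _))
  have hF : -(1 / 2 * l1Norm (H - projSupp Ω H)) ≤ frobInner F H := by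
    rw [← frobInner_sub_apply_of_symm _ (frobInner_projSupp Ω) hFΩ]
    exact neg_le_of_abs_le (abs_frobInner_le_mul_l1Norm _ _ hFnorm)
  have hΔ := neg_le_frobInner_of_projSupp_eq_self Ω hε.1.le hε.2.le hPP hΔΩ hΔF H
  linear_combination hnuc + lam * hl1 - hUV + hW + lam * hF + lam * hΔ

/-- quantitative lower bound on the PCP objective under the dual certificate. -/
theorem pcp_objective_lower_bound {n r : ℕ}
    (L₀ S₀ : Matrix (Fin n) (Fin n) ℝ)
    (U V : Matrix (Fin n) (Fin r) ℝ) (Sig : Matrix (Fin r) (Fin r) ℝ)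
    (hU : Uᵀ * U = 1) (hV : Vᵀ * V = 1)
    (hSigdiag : ∀ i j, i ≠ j → Sig i j = 0) (hSigpos : ∀ i, 0 < Sig i i)
    (hSVD : L₀ = U * Sig * Vᵀ)
    (Ω : Set (Fin n × Fin n)) [DecidablePred (· ∈ Ω)]
    (hΩ : Ω = {p : Fin n × Fin n | S₀ p.1 p.2 ≠ 0})
    (lam α ε : ℝ)
    (hα : α ∈ Set.Ioo (0:ℝ) 1) (hε : ε ∈ Set.Ioo (0:ℝ) 1)
    (hlam : 0 < lam) (hlamα : lam < 1 - α)
    (hεq : (1:ℝ)/2 - (1 - ε) * ε > 0) (hαε : (1 - α) - lam * ε > 0)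
    -- ‖P_Ω P_T‖ ≤ 1 - ε (as operators in the Frobenius norm)
    (hPP : ∀ M : Matrix (Fin n) (Fin n) ℝ,
      frobNorm (projSupp Ω (projT U V M)) ≤ (1 - ε) * frobNorm M)
    -- the dual certificate (W, F) and the residual Δ
    (W F Δ : Matrix (Fin n) (Fin n) ℝ)
    (hWT : projT U V W = 0) (hWnorm : matSpectralNorm W ≤ α)
    (hFΩ : projSupp Ω F = 0) (hFnorm : ∀ i j, |F i j| ≤ 1/2)
    (hΔΩ : projSupp Ω Δ = Δ) (hΔF : frobNorm Δ ≤ ε ^ 2)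
    (hcert : U * Vᵀ + W = lam • (signMatrix S₀ + F + Δ)) :
    ∀ H : Matrix (Fin n) (Fin n) ℝ,
      nuclearNorm (L₀ + H) + lam * l1Norm (S₀ - H) ≥
        nuclearNorm L₀ + lam * l1Norm S₀ +
          ((1 - α) - lam * ε) * nuclearNorm (H - projT U V H) +
          lam * ((1:ℝ)/2 - (1 - ε) * ε) * l1Norm (H - projSupp Ω H) :=
  pcp_objective_lower_bound_general L₀ S₀ U V Sig hU hV hSigdiag hSigpos hSVD Ω hΩ lam α ε hε hlam
    hPP W F Δ hWT hWnorm hFΩ hFnorm hΔΩ hΔF hcert
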